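/- Every function of bounded partial variation in the sense of Hardy has bounded harmonic variation: if V_1(f):=sup_y sup ∑_i |f(I_i,y)| < ∞ and V_2(f):=sup_x sup ∑_j |f(x,J_j)| < ∞ (suprema over finite families of pairwise nonoverlapping subintervals of [0,2π]), then HV_1(f)+HV_2(f)+HV_{1,2}(f) < ∞, i.e. PBV ⊆ HBV. -/

import Mathlib

open Real Filter Topology MeasureTheory
open scoped ENNReal NNReal BigOperators

noncomputable section

/-- `f` is `2π`-periodic in each variable. -/
def Periodic2 (f : ℝ → ℝ → ℝ) : Prop :=
  ∀ x y : ℝ, f (x + 2 * π) y = f x y ∧ f x (y + 2 * π) = f x y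

/-- A finite family of pairwise nonoverlapping (nondegenerate) subintervals of `[0, 2π]`,
each interval given by its pair (left endpoint, right endpoint). -/
def Nonoverlapping {n : ℕ} (I : Fin n → ℝ × ℝ) : Prop :=
  (∀ i, 0 ≤ (I i).1 ∧ (I i).1 < (I i).2 ∧ (I i).2 ≤ 2 * π) ∧
  (∀ i j, i ≠ j → (I i).2 ≤ (I j).1 ∨ (I j).2 ≤ (I i).1)

/-- `f(I, y) = f(b, y) - f(a, y)` for `I = (a, b)`. -/
def incr1 (f : ℝ → ℝ → ℝ) (I : ℝ × ℝ) (y : ℝ) : ℝ := f I.2 y - f I.1 y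

/-- `f(x, J) = f(x, d) - f(x, c)` for `J = (c, d)`. -/
def incr2 (f : ℝ → ℝ → ℝ) (x : ℝ) (J : ℝ × ℝ) : ℝ := f x J.2 - f x J.1

/-- The mixed difference `f(I, J)` for `I = (a, b)`, `J = (c, d)`. -/
def incr12 (f : ℝ → ℝ → ℝ) (I J : ℝ × ℝ) : ℝ :=
  f I.1 J.1 - f I.1 J.2 - f I.2 J.1 + f I.2 J.2

/-- `ΛV₁(f)`: the partial `Λ`-variation of `f` in the first variable. -/
def Var1 (Λ : ℕ → ℝ) (f : ℝ → ℝ → ℝ) : ℝ≥0∞ :=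
  ⨆ (y : ℝ) (n : ℕ) (I : {I : Fin n → ℝ × ℝ // Nonoverlapping I}),
    ∑ i : Fin n, ENNReal.ofReal (|incr1 f (I.1 i) y| / Λ (i.1 + 1))

/-- `ΛV₂(f)`: the partial `Λ`-variation of `f` in the second variable. -/
def Var2 (Λ : ℕ → ℝ) (f : ℝ → ℝ → ℝ) : ℝ≥0∞ :=
  ⨆ (x : ℝ) (m : ℕ) (J : {J : Fin m → ℝ × ℝ // Nonoverlapping J}),
    ∑ j : Fin m, ENNReal.ofReal (|incr2 f x (J.1 j)| / Λ (j.1 + 1))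

/-- `ΛV₁,₂(f)`: the mixed `Λ`-variation of `f`. -/
def Var12 (Λ : ℕ → ℝ) (f : ℝ → ℝ → ℝ) : ℝ≥0∞ :=
  ⨆ (n : ℕ) (m : ℕ) (I : {I : Fin n → ℝ × ℝ // Nonoverlapping I})
    (J : {J : Fin m → ℝ × ℝ // Nonoverlapping J}),
    ∑ i : Fin n, ∑ j : Fin m,
      ENNReal.ofReal (|incr12 f (I.1 i) (J.1 j)| / (Λ (i.1 + 1) * Λ (j.1 + 1)))

/-- The harmonic sequence `λ_n = n` (giving harmonic variation `HV`). -/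
def harmonicSeq : ℕ → ℝ := fun n => (n : ℝ)

/-- The constant sequence `λ_n = 1` (giving ordinary (Hardy) variation). -/
def oneSeq : ℕ → ℝ := fun _ => 1

/-- The partial modulus of variation `v₁(n, f)`. -/
def modulus1 (f : ℝ → ℝ → ℝ) (n : ℕ) : ℝ≥0∞ :=
  ⨆ (y : ℝ) (I : {I : Fin n → ℝ × ℝ // Nonoverlapping I}),
    ∑ i : Fin n, ENNReal.ofReal |incr1 f (I.1 i) y|

/-- The partial modulus of variation `v₂(m, f)`. -/
def modulus2 (f : ℝ → ℝ → ℝ) (m : ℕ) : ℝ≥0∞ :=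
  ⨆ (x : ℝ) (J : {J : Fin m → ℝ × ℝ // Nonoverlapping J}),
    ∑ j : Fin m, ENNReal.ofReal |incr2 f x (J.1 j)|

/-- The `Λ`-variation of a function of one variable on `[0, 2π]`. -/
def VarG (Λ : ℕ → ℝ) (g : ℝ → ℝ) : ℝ≥0∞ :=
  ⨆ (n : ℕ) (I : {I : Fin n → ℝ × ℝ // Nonoverlapping I}),
    ∑ i : Fin n, ENNReal.ofReal (|g (I.1 i).2 - g (I.1 i).1| / Λ (i.1 + 1))

/-- The norm `‖f‖_C + ΛV₁(f) + ΛV₂(f)` (with values in `ℝ≥0∞`). -/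
def PNorm (Λ : ℕ → ℝ) (f : ℝ → ℝ → ℝ) : ℝ≥0∞ :=
  (⨆ (x : ℝ) (y : ℝ), ENNReal.ofReal |f x y|) + Var1 Λ f + Var2 Λ f

/-- The Fourier coefficient `f̂(m, n)` of a (`2π`-periodic in each variable) function. -/
def fourierCoef (f : ℝ → ℝ → ℝ) (m n : ℤ) : ℂ :=
  (1 / (4 * (π : ℂ) ^ 2)) *
    ∫ x in (0:ℝ)..(2 * π), ∫ y in (0:ℝ)..(2 * π),
      (f x y : ℂ) * Complex.exp (-Complex.I * m * x) * Complex.exp (-Complex.I * n * y)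

/-- The rectangular partial sum `S_{M,N}[f](x, y)` of the double Fourier series of `f`. -/
def partialSum (f : ℝ → ℝ → ℝ) (M N : ℕ) (x y : ℝ) : ℂ :=
  ∑ m ∈ Finset.Icc (-(M : ℤ)) (M : ℤ), ∑ n ∈ Finset.Icc (-(N : ℤ)) (N : ℤ),
    fourierCoef f m n * Complex.exp (Complex.I * m * x) * Complex.exp (Complex.I * n * y)

/-- Pringsheim convergence of the rectangular partial sums at `(x, y)` to `L`. -/
def PringsheimConv (f : ℝ → ℝ → ℝ) (x y L : ℝ) : Prop :=
  ∀ ε : ℝ, 0 < ε → ∃ N₀ : ℕ, ∀ M N : ℕ, N₀ ≤ M → N₀ ≤ N →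
    ‖partialSum f M N x y - (L : ℂ)‖ < ε

/-- The four open-quadrant limits `f(x±0, y±0)` exist and equal `Lpp, Lpm, Lmp, Lmm`. -/
def QuadLimits (f : ℝ → ℝ → ℝ) (x y Lpp Lpm Lmp Lmm : ℝ) : Prop :=
  Tendsto (fun p : ℝ × ℝ => f p.1 p.2) ((𝓝[>] x) ×ˢ (𝓝[>] y)) (𝓝 Lpp) ∧
  Tendsto (fun p : ℝ × ℝ => f p.1 p.2) ((𝓝[>] x) ×ˢ (𝓝[<] y)) (𝓝 Lpm) ∧
  Tendsto (fun p : ℝ × ℝ => f p.1 p.2) ((𝓝[<] x) ×ˢ (𝓝[>] y)) (𝓝 Lmp) ∧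
  Tendsto (fun p : ℝ × ℝ => f p.1 p.2) ((𝓝[<] x) ×ˢ (𝓝[<] y)) (𝓝 Lmm)

/-
Each mixed difference is a difference of two one-variable increments,
`f(I, J) = f(I, d) - f(I, c)`, so summing `|f(I_i, J)|` over any nonoverlapping family `{I_i}`
costs at most `2 V₁(f)`, and symmetrically for `{J_j}`. Splitting the harmonic weight as
`1 / (i j) ≤ 1 / i² + 1 / j²` and summing first over the index that does not appear in the
weight bounds `HV₁,₂(f)` by `∑ 1 / k² · (2 V₁(f) + 2 V₂(f)) ≤ 4 (V₁(f) + V₂(f))`.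
-/

open Finset

lemma sum_fin_inv_succ_sq_le_two (n : ℕ) : ∑ i : Fin n, (((i : ℝ) + 1) ^ 2)⁻¹ ≤ 2 := by
  have hshift : ∑ i : Fin n, (((i : ℝ) + 1) ^ 2)⁻¹ = ∑ i ∈ Ioo 0 (n + 1), ((i : ℝ) ^ 2)⁻¹ := by
    rw [Fin.sum_univ_eq_sum_range (fun i => (((i : ℝ) + 1) ^ 2)⁻¹), range_eq_Ico,
      ← Ico_add_one_left_eq_Ioo, ← sum_Ico_add' (fun i : ℕ => ((i : ℝ) ^ 2)⁻¹)]
    push_cast; rfl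
  simpa [hshift] using sum_Ioo_inv_sq_le (α := ℝ) 0 (n + 1)

lemma sum_ofReal_inv_succ_sq_le_two (n : ℕ) :
    ∑ i : Fin n, ENNReal.ofReal (((i : ℝ) + 1) ^ 2)⁻¹ ≤ 2 := by
  rw [← ENNReal.ofReal_sum_of_nonneg fun _ _ => by positivity, ← ENNReal.ofReal_ofNat 2]
  exact ENNReal.ofReal_le_ofReal (sum_fin_inv_succ_sq_le_two n)

lemma inv_mul_le_inv_sq_add_inv_sq {a b : ℝ} (h : 0 ≤ a * b) :
    (a * b)⁻¹ ≤ (a ^ 2)⁻¹ + (b ^ 2)⁻¹ := by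
  have : (a ^ 2)⁻¹ + (b ^ 2)⁻¹ = (a⁻¹ - b⁻¹) ^ 2 + 2 * (a * b)⁻¹ := by ring
  nlinarith [sq_nonneg (a⁻¹ - b⁻¹), inv_nonneg.2 h]

lemma ofReal_div_harmonicSeq_mul_le (a : ℝ) (i j : ℕ) :
    ENNReal.ofReal (|a| / (harmonicSeq (i + 1) * harmonicSeq (j + 1)))
      ≤ ENNReal.ofReal |a| * ENNReal.ofReal (((i : ℝ) + 1) ^ 2)⁻¹
        + ENNReal.ofReal |a| * ENNReal.ofReal (((j : ℝ) + 1) ^ 2)⁻¹ := by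
  rw [← ENNReal.ofReal_mul (abs_nonneg a), ← ENNReal.ofReal_mul (abs_nonneg a),
    ← ENNReal.ofReal_add (by positivity) (by positivity), ← mul_add, div_eq_mul_inv]
  refine ENNReal.ofReal_le_ofReal (mul_le_mul_of_nonneg_left ?_ (abs_nonneg a))
  simpa [harmonicSeq] using inv_mul_le_inv_sq_add_inv_sq (a := (i : ℝ) + 1) (b := (j : ℝ) + 1)
    (by positivity)

section Variation

variable {f : ℝ → ℝ → ℝ} {Λ Λ' : ℕ → ℝ}

lemma Var1_le_Var1_of_le (h : ∀ k, 0 < Λ' (k + 1) ∧ Λ' (k + 1) ≤ Λ (k + 1)) :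
    Var1 Λ f ≤ Var1 Λ' f :=
  iSup_mono fun _ => iSup_mono fun _ => iSup_mono fun _ => sum_le_sum fun i _ =>
    ENNReal.ofReal_le_ofReal <| div_le_div_of_nonneg_left (abs_nonneg _) (h i).1 (h i).2

lemma Var2_le_Var2_of_le (h : ∀ k, 0 < Λ' (k + 1) ∧ Λ' (k + 1) ≤ Λ (k + 1)) :
    Var2 Λ f ≤ Var2 Λ' f :=
  iSup_mono fun _ => iSup_mono fun _ => iSup_mono fun _ => sum_le_sum fun j _ =>
    ENNReal.ofReal_le_ofReal <| div_le_div_of_nonneg_left (abs_nonneg _) (h j).1 (h j).2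

lemma oneSeq_le_harmonicSeq (k : ℕ) : 0 < oneSeq (k + 1) ∧ oneSeq (k + 1) ≤ harmonicSeq (k + 1) :=
  ⟨one_pos, by simp [oneSeq, harmonicSeq]⟩

lemma sum_abs_incr1_le_Var1 {n : ℕ} (I : {I : Fin n → ℝ × ℝ // Nonoverlapping I}) (y : ℝ) :
    ∑ i, ENNReal.ofReal |incr1 f (I.1 i) y| ≤ Var1 oneSeq f :=
  calc ∑ i, ENNReal.ofReal |incr1 f (I.1 i) y|
      = ∑ i, ENNReal.ofReal (|incr1 f (I.1 i) y| / oneSeq (i.1 + 1)) := by simp [oneSeq]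
    _ ≤ Var1 oneSeq f := le_iSup_of_le y <| le_iSup_of_le n <| le_iSup_of_le I le_rfl

lemma sum_abs_incr2_le_Var2 {m : ℕ} (J : {J : Fin m → ℝ × ℝ // Nonoverlapping J}) (x : ℝ) :
    ∑ j, ENNReal.ofReal |incr2 f x (J.1 j)| ≤ Var2 oneSeq f :=
  calc ∑ j, ENNReal.ofReal |incr2 f x (J.1 j)|
      = ∑ j, ENNReal.ofReal (|incr2 f x (J.1 j)| / oneSeq (j.1 + 1)) := by simp [oneSeq]
    _ ≤ Var2 oneSeq f := le_iSup_of_le x <| le_iSup_of_le m <| le_iSup_of_le J le_rfl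

lemma incr12_eq_incr1_sub (I J : ℝ × ℝ) : incr12 f I J = incr1 f I J.2 - incr1 f I J.1 := by
  simp only [incr12, incr1]; ring

lemma incr12_eq_incr2_sub (I J : ℝ × ℝ) : incr12 f I J = incr2 f I.2 J - incr2 f I.1 J := by
  simp only [incr12, incr2]; ring

lemma ofReal_abs_sub_le (a b : ℝ) :
    ENNReal.ofReal |a - b| ≤ ENNReal.ofReal |a| + ENNReal.ofReal |b| := by
  rw [← ENNReal.ofReal_add (abs_nonneg _) (abs_nonneg _)]
  exact ENNReal.ofReal_le_ofReal (abs_sub _ _)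

lemma sum_abs_incr12_le_two_mul_Var1 {n : ℕ} (I : {I : Fin n → ℝ × ℝ // Nonoverlapping I})
    (J : ℝ × ℝ) : ∑ i, ENNReal.ofReal |incr12 f (I.1 i) J| ≤ 2 * Var1 oneSeq f :=
  calc ∑ i, ENNReal.ofReal |incr12 f (I.1 i) J|
      ≤ ∑ i, (ENNReal.ofReal |incr1 f (I.1 i) J.2| + ENNReal.ofReal |incr1 f (I.1 i) J.1|) :=
        sum_le_sum fun i _ => incr12_eq_incr1_sub (I.1 i) J ▸ ofReal_abs_sub_le _ _
    _ ≤ Var1 oneSeq f + Var1 oneSeq f := by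
        rw [sum_add_distrib]
        exact add_le_add (sum_abs_incr1_le_Var1 I _) (sum_abs_incr1_le_Var1 I _)
    _ = 2 * Var1 oneSeq f := (two_mul _).symm

lemma sum_abs_incr12_le_two_mul_Var2 {m : ℕ} (J : {J : Fin m → ℝ × ℝ // Nonoverlapping J})
    (I : ℝ × ℝ) : ∑ j, ENNReal.ofReal |incr12 f I (J.1 j)| ≤ 2 * Var2 oneSeq f :=
  calc ∑ j, ENNReal.ofReal |incr12 f I (J.1 j)|
      ≤ ∑ j, (ENNReal.ofReal |incr2 f I.2 (J.1 j)| + ENNReal.ofReal |incr2 f I.1 (J.1 j)|) :=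
        sum_le_sum fun j _ => incr12_eq_incr2_sub I (J.1 j) ▸ ofReal_abs_sub_le _ _
    _ ≤ Var2 oneSeq f + Var2 oneSeq f := by
        rw [sum_add_distrib]
        exact add_le_add (sum_abs_incr2_le_Var2 J _) (sum_abs_incr2_le_Var2 J _)
    _ = 2 * Var2 oneSeq f := (two_mul _).symm

lemma Var12_harmonicSeq_le :
    Var12 harmonicSeq f ≤ 4 * (Var1 oneSeq f + Var2 oneSeq f) := by
  refine iSup_le fun n => iSup_le fun m => iSup_le fun I => iSup_le fun J => ?_
  set A : Fin n → Fin m → ℝ≥0∞ := fun i j => ENNReal.ofReal |incr12 f (I.1 i) (J.1 j)|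
  set w : ℕ → ℝ≥0∞ := fun k => ENNReal.ofReal (((k : ℝ) + 1) ^ 2)⁻¹
  calc ∑ i, ∑ j, ENNReal.ofReal (|incr12 f (I.1 i) (J.1 j)|
          / (harmonicSeq (i.1 + 1) * harmonicSeq (j.1 + 1)))
      ≤ ∑ i, ∑ j, (A i j * w i + A i j * w j) :=
        sum_le_sum fun i _ => sum_le_sum fun j _ => ofReal_div_harmonicSeq_mul_le _ i j
    _ = ∑ i, (∑ j, A i j) * w i + ∑ j, (∑ i, A i j) * w j := by
        simp only [sum_add_distrib, sum_mul]
        rw [sum_comm (f := fun i j => A i j * w j)]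
    _ ≤ ∑ i : Fin n, 2 * Var2 oneSeq f * w i + ∑ j : Fin m, 2 * Var1 oneSeq f * w j := by
        gcongr with i _ j _
        · exact sum_abs_incr12_le_two_mul_Var2 J (I.1 i)
        · exact sum_abs_incr12_le_two_mul_Var1 I (J.1 j)
    _ ≤ 2 * Var2 oneSeq f * 2 + 2 * Var1 oneSeq f * 2 := by
        simp only [← mul_sum]
        gcongr <;> exact sum_ofReal_inv_succ_sq_le_two _
    _ = 4 * (Var1 oneSeq f + Var2 oneSeq f) := by ring

end Variation

theorem statement2_general (f : ℝ → ℝ → ℝ)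
    (hV1 : Var1 oneSeq f < ⊤) (hV2 : Var2 oneSeq f < ⊤) :
    Var1 harmonicSeq f + Var2 harmonicSeq f + Var12 harmonicSeq f < ⊤ := by
  have hHV1 := (Var1_le_Var1_of_le oneSeq_le_harmonicSeq).trans_lt hV1
  have hHV2 := (Var2_le_Var2_of_le oneSeq_le_harmonicSeq).trans_lt hV2
  have hHV12 : Var12 harmonicSeq f < ⊤ := Var12_harmonicSeq_le.trans_lt (by finiteness)
  exact ENNReal.add_lt_top.2 ⟨ENNReal.add_lt_top.2 ⟨hHV1, hHV2⟩, hHV12⟩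

/-- every function of bounded partial variation in the sense of Hardy
has bounded harmonic variation: `PBV ⊆ HBV`. -/
theorem statement2 (f : ℝ → ℝ → ℝ) (hper : Periodic2 f)
    (hV1 : Var1 oneSeq f < ⊤) (hV2 : Var2 oneSeq f < ⊤) :
    Var1 harmonicSeq f + Var2 harmonicSeq f + Var12 harmonicSeq f < ⊤ :=
  statement2_general f hV1 hV2
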